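/- Let m ≥ 2 and Ψ : R^{m−1} → R^{m−1}, Ψ(x, y_1, ..., y_{m−2}) = (x^m + Σ_{i=1}^{m−2} x^i y_i, y_1, ..., y_{m−2}). There is no smooth curve γ : (−ε, ε) → R^{m−1} with γ(0) = 0 and γ'(0) ≠ 0 such that Ψ(γ(s)) = o(s^m) as s → 0. Consequently, the origin is a singular point of type (1, m) for Ψ. -/

import Mathlib

open Filter Topology Asymptotics

/-- `f` admits, along some smooth curve through `q` with nonvanishing velocity, an image
curve of order exactly `k`: `f (γ t) = f q + tᵏ v + o(tᵏ)` with `v ≠ 0`. -/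
def HasOrderCurve {E : Type*} [NormedAddCommGroup E] [NormedSpace ℝ E]
    (f : E → E) (q : E) (k : ℕ) : Prop :=
  ∃ γ : ℝ → E, ContDiff ℝ (⊤ : ℕ∞) γ ∧ γ 0 = q ∧ deriv γ 0 ≠ 0 ∧
    ∃ v : E, v ≠ 0 ∧
      (fun t : ℝ => f (γ t) - f q - t ^ k • v) =o[𝓝 (0 : ℝ)] fun t : ℝ => t ^ k

/-- `q` is a singular point of type `(1, m)` for `f`: the differential of `f` at `q`
has a one-dimensional kernel (rank `n - 1`), and `m` is the maximal order of contact
of `f ∘ γ` over smooth curves `γ` through `q` with `γ'(0) ≠ 0`. -/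
def IsSingularPointOfType1m {E : Type*} [NormedAddCommGroup E] [NormedSpace ℝ E]
    (f : E → E) (q : E) (m : ℕ) : Prop :=
  Module.finrank ℝ (LinearMap.ker (fderiv ℝ f q).toLinearMap) = 1 ∧
    HasOrderCurve f q m ∧ ∀ k : ℕ, HasOrderCurve f q k → k ≤ m


theorem Am_key (m : ℕ) (hm : 2 ≤ m)
    (Ψ : (Fin (m - 1) → ℝ) → (Fin (m - 1) → ℝ))
    (hΨ : ∀ v : Fin (m - 1) → ℝ, ∀ j : Fin (m - 1),
      Ψ v j = if (j : ℕ) = 0 then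
          (v ⟨0, Nat.sub_pos_of_lt hm⟩) ^ m +
            ∑ i : Fin (m - 1), (if 1 ≤ (i : ℕ) then (v ⟨0, Nat.sub_pos_of_lt hm⟩) ^ (i : ℕ) * v i else 0)
        else v j) :
    ¬ ∃ γ : ℝ → (Fin (m - 1) → ℝ), ContDiff ℝ (⊤ : ℕ∞) γ ∧ γ 0 = 0 ∧ deriv γ 0 ≠ 0 ∧
        (fun s : ℝ => Ψ (γ s)) =o[𝓝 (0 : ℝ)] fun s : ℝ => s ^ m := by
  rintro ⟨γ, hγ, hγ0, hγ', ho⟩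
  have hz : (0 : ℕ) < m - 1 := by omega
  set z : Fin (m - 1) := ⟨0, hz⟩ with hzdef
  -- componentwise littleO
  have hcomp : ∀ j : Fin (m - 1), (fun s => Ψ (γ s) j) =o[𝓝 (0 : ℝ)] fun s => s ^ m := by
    intro j
    exact (isBigO_of_le _ (fun s => norm_le_pi_norm (Ψ (γ s)) j)).trans_isLittleO ho
  have hd : HasDerivAt γ (deriv γ 0) 0 :=
    ((hγ.differentiable (by simp)) 0).hasDerivAt
  have hdj : ∀ j, HasDerivAt (fun s => γ s j) (deriv γ 0 j) 0 := hasDerivAt_pi.1 hd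
  -- s ^ m = O(s)
  have hpow1 : (fun s : ℝ => s ^ m) =O[𝓝 (0 : ℝ)] fun s => s := by
    apply IsBigO.of_bound 1
    filter_upwards [Metric.ball_mem_nhds (0 : ℝ) one_pos] with s hs
    rw [Metric.mem_ball, dist_zero_right, Real.norm_eq_abs] at hs
    rw [Real.norm_eq_abs, Real.norm_eq_abs, one_mul, abs_pow]
    calc |s| ^ m ≤ |s| ^ 1 := pow_le_pow_of_le_one (abs_nonneg s) hs.le (by omega)
      _ = |s| := pow_one _
  -- components j ≠ 0 of Ψ ∘ γ equal γ _ j, hence are o(s^m)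
  have hyo : ∀ j : Fin (m - 1), (j : ℕ) ≠ 0 →
      (fun s => γ s j) =o[𝓝 (0 : ℝ)] fun s => s ^ m := by
    intro j hj
    have hΨj : (fun s => Ψ (γ s) j) = fun s => γ s j := by
      funext s; rw [hΨ, if_neg hj]
    rw [← hΨj]; exact hcomp j
  -- deriv components vanish for j ≠ 0
  have hyd : ∀ j : Fin (m - 1), (j : ℕ) ≠ 0 → deriv γ 0 j = 0 := by
    intro j hj
    have h1 : (fun s => γ s j) =o[𝓝 (0 : ℝ)] fun s => s :=
      (hyo j hj).trans_isBigO hpow1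
    have h2 : HasDerivAt (fun s => γ s j) 0 0 := by
      rw [hasDerivAt_iff_isLittleO]
      simpa [hγ0] using h1
    exact (hdj j).unique h2
  set a : ℝ := deriv γ 0 z with ha
  have haz : a ≠ 0 := by
    intro h
    apply hγ'
    funext j
    by_cases hj : (j : ℕ) = 0
    · have : j = z := Fin.ext hj
      rw [this]; exact h
    · exact hyd j hj
  -- the x coordinate
  have hx : HasDerivAt (fun s => γ s z) a 0 := hdj z
  have h1 : (fun s : ℝ => γ s z - s * a) =o[𝓝 (0 : ℝ)] fun s => s := by
    have := hasDerivAt_iff_isLittleO.1 hx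
    simpa [hγ0, mul_comm] using this
  have hxO : (fun s : ℝ => γ s z) =O[𝓝 (0 : ℝ)] fun s => s := by
    have h2 : (fun s : ℝ => s * a) =O[𝓝 (0 : ℝ)] fun s => s := by
      apply IsBigO.of_bound |a|
      filter_upwards with s
      rw [Real.norm_eq_abs, Real.norm_eq_abs, abs_mul, mul_comm]
    simpa using h1.isBigO.add h2
  have hsa : (fun s : ℝ => s * a) =O[𝓝 (0 : ℝ)] fun s => s := by
    apply IsBigO.of_bound |a|
    filter_upwards with s
    rw [Real.norm_eq_abs, Real.norm_eq_abs, abs_mul, mul_comm]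
  -- x ^ m - (s a) ^ m = o(s ^ m)
  have hxm : (fun s : ℝ => (γ s z) ^ m - (s * a) ^ m) =o[𝓝 (0 : ℝ)] fun s => s ^ m := by
    have hsum : (fun s : ℝ => ∑ i ∈ Finset.range m, (γ s z) ^ i * (s * a) ^ (m - 1 - i))
        =O[𝓝 (0 : ℝ)] fun s => s ^ (m - 1) := by
      apply IsBigO.fun_sum
      intro i hi
      simp only [Finset.mem_range] at hi
      have h3 := (hxO.pow i).mul (hsa.pow (m - 1 - i))
      have heq : (fun s : ℝ => s ^ i * s ^ (m - 1 - i)) = fun s : ℝ => s ^ (m - 1) := by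
        funext s; rw [← pow_add]; congr 1; omega
      rwa [heq] at h3
    have hmul := h1.mul_isBigO hsum
    have heq1 : (fun s : ℝ => (γ s z - s * a) *
        ∑ i ∈ Finset.range m, (γ s z) ^ i * (s * a) ^ (m - 1 - i))
        = fun s : ℝ => (γ s z) ^ m - (s * a) ^ m := by
      funext s; rw [mul_comm, geom_sum₂_mul]
    have heq2 : (fun s : ℝ => s * s ^ (m - 1)) = fun s : ℝ => s ^ m := by
      funext s; rw [← pow_succ']; congr 1; omega
    rwa [heq1, heq2] at hmul
  -- each mixed term is o(s ^ m)
  have hterm : ∀ i : Fin (m - 1),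
      (fun s : ℝ => if 1 ≤ (i : ℕ) then (γ s z) ^ (i : ℕ) * γ s i else 0)
        =o[𝓝 (0 : ℝ)] fun s => s ^ m := by
    intro i
    by_cases hi : 1 ≤ (i : ℕ)
    · simp only [hi, if_true]
      have hb : (fun s : ℝ => (γ s z) ^ (i : ℕ)) =O[𝓝 (0 : ℝ)] (fun _ => (1 : ℝ)) := by
        have hc : Continuous fun s : ℝ => γ s z := (continuous_apply z).comp hγ.continuous
        have ht : Tendsto (fun s : ℝ => (γ s z) ^ (i : ℕ)) (𝓝 0) (𝓝 ((γ 0 z) ^ (i : ℕ))) :=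
          ((hc.pow _).tendsto 0)
        exact ht.isBigO_one ℝ
      have := hb.mul_isLittleO (hyo i (by omega))
      simpa using this
    · simp only [hi, if_false]
      exact isLittleO_zero _ _
  have hsum2 : (fun s : ℝ => ∑ i : Fin (m - 1),
      if 1 ≤ (i : ℕ) then (γ s z) ^ (i : ℕ) * γ s i else 0)
      =o[𝓝 (0 : ℝ)] fun s => s ^ m := IsLittleO.fun_sum fun i _ => hterm i
  -- conclude that (s a) ^ m = o(s ^ m)
  have hΨz : ∀ s : ℝ, Ψ (γ s) z = (γ s z) ^ m +
      ∑ i : Fin (m - 1), (if 1 ≤ (i : ℕ) then (γ s z) ^ (i : ℕ) * γ s i else 0) := by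
    intro s; rw [hΨ, if_pos rfl]
  have hfinal : (fun s : ℝ => (s * a) ^ m) =o[𝓝 (0 : ℝ)] fun s => s ^ m := by
    have h5 := ((hcomp z).sub hxm).sub hsum2
    have heq : (fun s : ℝ => Ψ (γ s) z - ((γ s z) ^ m - (s * a) ^ m) -
        ∑ i : Fin (m - 1), (if 1 ≤ (i : ℕ) then (γ s z) ^ (i : ℕ) * γ s i else 0))
        = fun s : ℝ => (s * a) ^ m := by
      funext s; rw [hΨz s]; ring
    rwa [heq] at h5
  -- derive a contradiction
  have hfinal2 : (fun s : ℝ => a ^ m * s ^ m) =o[𝓝 (0 : ℝ)] fun s => s ^ m := by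
    have heq : (fun s : ℝ => (s * a) ^ m) = fun s : ℝ => a ^ m * s ^ m := by
      funext s; rw [mul_pow]; ring
    rwa [heq] at hfinal
  have ham : a ^ m ≠ 0 := pow_ne_zero _ haz
  rw [isLittleO_const_mul_left_iff ham] at hfinal2
  refine isLittleO_irrefl ?_ hfinal2
  rw [Filter.frequently_iff]
  intro U hU
  obtain ⟨ε, hε, hball⟩ := Metric.mem_nhds_iff.1 hU
  refine ⟨ε / 2, hball ?_, pow_ne_zero _ (by positivity)⟩
  rw [Metric.mem_ball, dist_zero_right, Real.norm_eq_abs, abs_of_pos (by positivity)]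
  linarith

theorem Am_main (m : ℕ) (hm : 2 ≤ m)
    (Ψ : (Fin (m - 1) → ℝ) → (Fin (m - 1) → ℝ))
    (hΨ : ∀ v : Fin (m - 1) → ℝ, ∀ j : Fin (m - 1),
      Ψ v j = if (j : ℕ) = 0 then
          (v ⟨0, Nat.sub_pos_of_lt hm⟩) ^ m +
            ∑ i : Fin (m - 1), (if 1 ≤ (i : ℕ) then (v ⟨0, Nat.sub_pos_of_lt hm⟩) ^ (i : ℕ) * v i else 0)
        else v j)
    (_key : ¬ ∃ γ : ℝ → (Fin (m - 1) → ℝ), ContDiff ℝ (⊤ : ℕ∞) γ ∧ γ 0 = 0 ∧ deriv γ 0 ≠ 0 ∧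
        (fun s : ℝ => Ψ (γ s)) =o[𝓝 (0 : ℝ)] fun s : ℝ => s ^ m) :
    Module.finrank ℝ (LinearMap.ker (fderiv ℝ Ψ 0).toLinearMap) = 1
    ∧ (∃ γ : ℝ → (Fin (m-1) → ℝ), ContDiff ℝ (⊤ : ℕ∞) γ ∧ γ 0 = 0 ∧ deriv γ 0 ≠ 0 ∧
    ∃ v : (Fin (m-1) → ℝ), v ≠ 0 ∧
      (fun t : ℝ => Ψ (γ t) - Ψ 0 - t ^ m • v) =o[𝓝 (0 : ℝ)] fun t : ℝ => t ^ m) := by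
  have hz : (0 : ℕ) < m - 1 := by omega
  set z : Fin (m - 1) := ⟨0, hz⟩ with hzdef
  set e : Fin (m - 1) → ℝ := fun j => if (j : ℕ) = 0 then 1 else 0 with hedef
  have he : e ≠ 0 := by
    intro h
    have := congrFun h z
    simp [hedef, hzdef] at this
  have hΨ0 : Ψ 0 = 0 := by
    funext j
    rw [hΨ]
    by_cases hj : (j : ℕ) = 0
    · rw [if_pos hj]
      have hm0 : m ≠ 0 := by omega
      simp [zero_pow hm0]
    · rw [if_neg hj]
  constructor
  · -- finrank of the kernel
    set L : (Fin (m - 1) → ℝ) →L[ℝ] (Fin (m - 1) → ℝ) :=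
      ContinuousLinearMap.pi (fun j : Fin (m - 1) =>
        if (j : ℕ) = 0 then 0 else ContinuousLinearMap.proj j) with hLdef
    have hF : HasFDerivAt Ψ L 0 := by
      rw [hasFDerivAt_pi']
      intro j
      rw [hLdef, ContinuousLinearMap.proj_pi]
      by_cases hj : (j : ℕ) = 0
      · rw [if_pos hj]
        have hΨj : (fun v : Fin (m - 1) → ℝ => Ψ v j) = fun v : Fin (m - 1) → ℝ =>
            (v z) ^ m + ∑ i : Fin (m - 1),
              (if 1 ≤ (i : ℕ) then (v z) ^ (i : ℕ) * v i else 0) := by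
          funext v; rw [hΨ, if_pos hj]
        rw [hΨj]
        have hm1 : m - 1 ≠ 0 := by omega
        have h1 : HasFDerivAt (fun v : Fin (m - 1) → ℝ => (v z) ^ m)
            (0 : (Fin (m - 1) → ℝ) →L[ℝ] ℝ) 0 := by
          have heq : (fun v : Fin (m - 1) → ℝ => (v z) ^ m)
              = fun v : Fin (m - 1) → ℝ => v z * v z ^ (m - 1) := by
            funext v
            rw [← pow_succ']
            congr 1
            omega
          rw [heq]
          have d2 : DifferentiableAt ℝ (fun v : Fin (m - 1) → ℝ => v z ^ (m - 1)) 0 :=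
            ((hasFDerivAt_apply z (0 : Fin (m - 1) → ℝ)).differentiableAt).pow _
          have := (hasFDerivAt_apply z (0 : Fin (m - 1) → ℝ)).fun_mul d2.hasFDerivAt
          simpa [zero_pow hm1] using this
        have h2 : ∀ i : Fin (m - 1), HasFDerivAt
            (fun v : Fin (m - 1) → ℝ => if 1 ≤ (i : ℕ) then (v z) ^ (i : ℕ) * v i else 0)
            (0 : (Fin (m - 1) → ℝ) →L[ℝ] ℝ) 0 := by
          intro i
          by_cases hi : 1 ≤ (i : ℕ)
          · simp only [hi, if_true]
            have hi0 : (i : ℕ) ≠ 0 := by omega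
            have dc : DifferentiableAt ℝ (fun v : Fin (m - 1) → ℝ => v z ^ (i : ℕ)) 0 :=
              ((hasFDerivAt_apply z (0 : Fin (m - 1) → ℝ)).differentiableAt).pow _
            have hq := dc.hasFDerivAt.fun_mul (hasFDerivAt_apply i (0 : Fin (m - 1) → ℝ))
            simpa [zero_pow hi0] using hq
          · simp only [hi, if_false]
            exact hasFDerivAt_const _ _
        have h3 := h1.fun_add (HasFDerivAt.fun_sum (u := Finset.univ)
          (fun i _ => h2 i))
        simpa using h3
      · rw [if_neg hj]
        have hΨj : (fun v : Fin (m - 1) → ℝ => Ψ v j) = fun v : Fin (m - 1) → ℝ => v j := by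
          funext v; rw [hΨ, if_neg hj]
        rw [hΨj]
        exact hasFDerivAt_apply j 0
    rw [hF.fderiv]
    have hker : LinearMap.ker L.toLinearMap = Submodule.span ℝ {e} := by
      ext v
      simp only [LinearMap.mem_ker, Submodule.mem_span_singleton]
      constructor
      · intro hv
        refine ⟨v z, ?_⟩
        have hv' : ∀ j, L v j = 0 := fun j => congrFun hv j
        funext j
        by_cases hj : (j : ℕ) = 0
        · have : j = z := Fin.ext hj
          rw [this]
          simp [hedef, hzdef]
        · have h4 := hv' j
          rw [hLdef] at h4
          simp only [ContinuousLinearMap.pi_apply] at h4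
          rw [if_neg hj] at h4
          simp only [ContinuousLinearMap.proj_apply] at h4
          simp [hedef, hj, h4]
      · rintro ⟨c, rfl⟩
        have : L.toLinearMap (c • e) = 0 := by
          funext j
          rw [hLdef]
          simp only [ContinuousLinearMap.coe_coe, ContinuousLinearMap.pi_apply]
          by_cases hj : (j : ℕ) = 0
          · rw [if_pos hj]; rfl
          · rw [if_neg hj]
            simp [hedef, hj]
        exact this
    rw [hker]
    exact finrank_span_singleton he
  · -- the order-m curve
    refine ⟨fun t : ℝ => t • e, contDiff_id.smul contDiff_const, by simp, ?_, e, he, ?_⟩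
    · have hde : HasDerivAt (fun t : ℝ => t • e) e 0 := by
        simpa using (hasDerivAt_id (0 : ℝ)).smul_const e
      rw [hde.deriv]
      exact he
    · have hval : ∀ t : ℝ, Ψ (t • e) = t ^ m • e := by
        intro t
        funext j
        rw [hΨ]
        by_cases hj : (j : ℕ) = 0
        · rw [if_pos hj]
          have h1 : (t • e) ⟨0, by omega⟩ = t := by
            simp [hedef]
          rw [h1]
          have h2 : ∀ i : Fin (m - 1),
              (if 1 ≤ (i : ℕ) then t ^ (i : ℕ) * (t • e) i else 0) = 0 := by
            intro i
            by_cases hi : 1 ≤ (i : ℕ)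
            · rw [if_pos hi]
              have : e i = 0 := by simp [hedef, show (i : ℕ) ≠ 0 by omega]
              simp [this]
            · rw [if_neg hi]
          rw [Finset.sum_eq_zero fun i _ => h2 i, add_zero]
          simp [hedef, hj]
        · rw [if_neg hj]
          simp [hedef, hj]
      have heq : (fun t : ℝ => Ψ (t • e) - Ψ 0 - t ^ m • e) = fun _ : ℝ => 0 := by
        funext t
        rw [hval t, hΨ0]
        simp
      rw [heq]
      exact isLittleO_zero _ _

/-- For `m ≥ 2` and the `A_m` normal form map `Ψ`, there is no smooth curve `γ` with
`γ(0) = 0`, `γ'(0) ≠ 0` and `Ψ(γ(s)) = o(sᵐ)` as `s → 0`; consequently the origin is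
a singular point of type `(1, m)` for `Ψ`. -/
theorem Am_no_higher_order_curve (m : ℕ) (hm : 2 ≤ m)
    (Ψ : (Fin (m - 1) → ℝ) → (Fin (m - 1) → ℝ))
    (hΨ : ∀ v : Fin (m - 1) → ℝ, ∀ j : Fin (m - 1),
      Ψ v j = if (j : ℕ) = 0 then
          (v ⟨0, by omega⟩) ^ m +
            ∑ i : Fin (m - 1), (if 1 ≤ (i : ℕ) then (v ⟨0, by omega⟩) ^ (i : ℕ) * v i else 0)
        else v j) :
    (¬ ∃ γ : ℝ → (Fin (m - 1) → ℝ), ContDiff ℝ (⊤ : ℕ∞) γ ∧ γ 0 = 0 ∧ deriv γ 0 ≠ 0 ∧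
        (fun s : ℝ => Ψ (γ s)) =o[𝓝 (0 : ℝ)] fun s : ℝ => s ^ m) ∧
    IsSingularPointOfType1m Ψ 0 m := by
  have key := Am_key m hm Ψ hΨ
  obtain ⟨h1, h2⟩ := Am_main m hm Ψ hΨ key
  have hΨ0 : Ψ 0 = 0 := by
    funext j
    rw [hΨ]
    by_cases hj : (j : ℕ) = 0
    · rw [if_pos hj]
      have hm0 : m ≠ 0 := by omega
      simp [zero_pow hm0]
    · rw [if_neg hj]
  refine ⟨key, h1, h2, ?_⟩
  -- maximality of the order m
  intro k hk
  by_contra hlt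
  push_neg at hlt
  obtain ⟨γ, hc, h0, hd, v, hv, h5⟩ := hk
  refine key ⟨γ, hc, h0, hd, ?_⟩
  have hkm : (fun t : ℝ => t ^ k) =o[𝓝 (0 : ℝ)] fun t => t ^ m := by
    have h6 : Tendsto (fun t : ℝ => t ^ (k - m)) (𝓝 0) (𝓝 0) := by
      have := (continuous_pow (k - m)).tendsto (0 : ℝ)
      rwa [zero_pow (show k - m ≠ 0 by omega)] at this
    have h7 := ((isLittleO_one_iff ℝ).2 h6).mul_isBigO
      (isBigO_refl (fun t : ℝ => t ^ m) (𝓝 0))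
    have e1 : (fun t : ℝ => t ^ (k - m) * t ^ m) = fun t : ℝ => t ^ k := by
      funext t; rw [← pow_add]; congr 1; omega
    have e2 : (fun t : ℝ => (1 : ℝ) * t ^ m) = fun t : ℝ => t ^ m := by
      funext t; rw [one_mul]
    rwa [e1, e2] at h7
  have h5' := h5.trans_isBigO hkm.isBigO
  have hterm2 : (fun t : ℝ => t ^ k • v) =o[𝓝 (0 : ℝ)] fun t => t ^ m := by
    have hO : (fun t : ℝ => t ^ k • v) =O[𝓝 (0 : ℝ)] fun t => t ^ k := by
      apply IsBigO.of_bound ‖v‖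
      filter_upwards with t
      exact le_of_eq (by rw [norm_smul, mul_comm])
    exact hO.trans_isLittleO hkm
  have h9 := h5'.add hterm2
  have e3 : (fun t : ℝ => (Ψ (γ t) - Ψ 0 - t ^ k • v) + t ^ k • v) = fun t => Ψ (γ t) := by
    funext t; rw [hΨ0]; simp
  rwa [e3] at h9
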